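/- Let h ≥ k ≥ 1 be integers. There exists a polynomial p_{k,h}(t) ∈ ℤ[t], depending only on k and h, such that for every matroid M of rank k, every stressed hyperplane H of M with |H| = h, and the relaxation M̃ of M at H, one has P_{M̃}(t) = P_M(t) + p_{k,h}(t). -/

import Mathlib

/-!
Since `Z_M` is palindromic of degree `rk M` and `deg P_M < rk M / 2`, the polynomial `P_M` is
determined by `Z_M - P_M = ∑_{S ≠ ∅} t^{rk S} P_{M/S}`, so it suffices to compare these sums for
`M̃` and `M` subset by subset. For `S ⊄ H`, the matroids `M̃` and `M` have the same rank at `S` and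
the same contraction by `S`. For `S ⊆ H` with `|S| < k`, the set `S` is independent, `H \ S` is a
stressed hyperplane of `M/S` of size `h - |S|` and `M̃/S` is its relaxation, so by induction on
the rank the term changes by `t^{|S|} p_{k-|S|,h-|S|}`. For `S ⊆ H` with `|S| ≥ k`, the
contraction `M̃/S` has rank `0` while `M/S` has rank `1` with loops `H \ S`, so only `S = H`
contributes, by `-t^{k-1}`. Hence `p_{k,h}` is given by a recursion in `k` involving only `k`
and `h`.
-/

open Polynomial Matroid

namespace KLPaper

variable {α : Type} [Fintype α]

/-- The contraction `M ⧸ C` of a set `C` in a matroid `M`, defined (as is standard,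
see e.g. Oxley, Prop. 3.1.1) as the dual of the deletion of `C` from the dual matroid,
where deletion of `C` is restriction to `M.E \ C`.  Its ground set is `M.E \ C`. -/
noncomputable def contract (M : Matroid α) (C : Set α) : Matroid α :=
  (M✶ ↾ (M.E \ C))✶

scoped infixl:75 " ⧸ " => KLPaper.contract

/-- The rank `rk M S` of a set `S` in a matroid `M`: the largest cardinality of an
independent subset of `S`. -/
noncomputable def rk (M : Matroid α) (S : Set α) : ℕ :=
  sSup {n | ∃ I, I ⊆ S ∧ M.Indep I ∧ I.ncard = n}

/-- The rank of a matroid: the rank of its ground set. -/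
noncomputable def rank (M : Matroid α) : ℕ := rk M M.E

/-- A circuit of a matroid: a minimal dependent set, i.e. a dependent subset of the
ground set all of whose proper subsets are independent. -/
def IsCircuit (M : Matroid α) (C : Set α) : Prop :=
  M.Dep C ∧ ∀ D ⊂ C, M.Indep D

/-- A hyperplane of a matroid: a maximal proper flat. -/
def IsHyperplane (M : Matroid α) (H : Set α) : Prop :=
  M.IsFlat H ∧ H ≠ M.E ∧ ∀ F, M.IsFlat F → H ⊂ F → F = M.E

/-- A stressed hyperplane of a matroid `M` of rank `k`: a hyperplane `H` such that every
`k`-element subset of `H` is a circuit of `M`. -/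
def Stressed (M : Matroid α) (H : Set α) : Prop :=
  IsHyperplane M H ∧ ∀ C ⊆ H, C.ncard = rank M → IsCircuit M C

/-- `Mt` is the relaxation of `M` at the stressed hyperplane `H`: the matroid on the same
ground set whose bases are exactly the bases of `M` together with all `(rank M)`-element
subsets of `H`. -/
def IsRelaxation (M Mt : Matroid α) (H : Set α) : Prop :=
  Mt.E = M.E ∧ ∀ B : Set α, Mt.IsBase B ↔ (M.IsBase B ∨ (B ⊆ H ∧ B.ncard = rank M))

/-- The characterization of the Kazhdan–Lusztig polynomials `P_M` and the `Z`-polynomials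
`Z_M` of matroids (on a fixed finite type): (i) both equal `1` on matroids with empty
ground set; (ii) `2 · deg P_M < rk M` when the ground set is nonempty (the zero
polynomial being allowed); (iii) `Z_M` is palindromic of degree `rk M`;
(iv) `Z_M = Σ_{S ⊆ E} t^{rk S} · P_{M ⧸ S}`, the sum over all subsets `S` of `E`. -/
def PZaxioms (P Z : Matroid α → Polynomial ℤ) : Prop :=
  (∀ M : Matroid α, M.E = ∅ → P M = 1 ∧ Z M = 1) ∧
  (∀ M : Matroid α, M.E ≠ ∅ → (P M = 0 ∨ 2 * (P M).natDegree < rank M)) ∧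
  (∀ M : Matroid α, (Z M).natDegree ≤ rank M ∧
      ∀ i ≤ rank M, (Z M).coeff i = (Z M).coeff (rank M - i)) ∧
  (∀ M : Matroid α,
      Z M = ∑ S ∈ M.E.toFinite.toFinset.powerset,
        X ^ (rk M (S : Set α)) * P (M ⧸ (S : Set α)))

end KLPaper

open Set KLPaper

namespace Matroid

variable {α : Type} {M : Matroid α} {I S T B : Set α}

theorem IsFlat.closure_subset_of_subset {F X : Set α} (hF : M.IsFlat F) (hXF : X ⊆ F) :
    M.closure X ⊆ F :=
  hF.closure ▸ M.closure_subset_closure hXF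

variable [Finite α]

theorem IsBasis'.rk_eq_ncard (hI : M.IsBasis' I S) : rk M S = I.ncard := by
  refine IsGreatest.csSup_eq ⟨⟨I, hI.subset, hI.indep, rfl⟩, ?_⟩
  rintro _ ⟨J, hJS, hJ, rfl⟩
  rw [ncard_def, ncard_def]
  exact ENat.toNat_le_toNat (hI.encard_eq_eRk ▸ hJ.encard_le_eRk_of_subset hJS)
    I.toFinite.encard_lt_top.ne

theorem Indep.rk_eq_ncard (hI : M.Indep I) : rk M I = I.ncard :=
  hI.isBasis_self.isBasis'.rk_eq_ncard

theorem IsBase.ncard_eq_rank (hB : M.IsBase B) : B.ncard = rank M :=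
  hB.isBasis_ground.isBasis'.rk_eq_ncard.symm

theorem Indep.ncard_le_rk (hI : M.Indep I) (hIS : I ⊆ S) : I.ncard ≤ rk M S := by
  obtain ⟨J, hJ, hIJ⟩ := hI.subset_isBasis'_of_subset hIS
  exact hJ.rk_eq_ncard ▸ ncard_le_ncard hIJ

theorem Indep.ncard_le_rank (hI : M.Indep I) : I.ncard ≤ rank M :=
  hI.ncard_le_rk hI.subset_ground

theorem Indep.isBase_of_rank_le_ncard (hI : M.Indep I) (h : rank M ≤ I.ncard) : M.IsBase I := by
  obtain ⟨B, hB, hIB⟩ := hI.exists_isBase_superset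
  rwa [eq_of_subset_of_ncard_le hIB (hB.ncard_eq_rank ▸ h)]

theorem rk_mono (M : Matroid α) (hST : S ⊆ T) : rk M S ≤ rk M T := by
  obtain ⟨I, hI⟩ := M.exists_isBasis' S
  exact hI.rk_eq_ncard ▸ hI.indep.ncard_le_rk (hI.subset.trans hST)

theorem rk_le_rank (M : Matroid α) (S : Set α) : rk M S ≤ rank M := by
  obtain ⟨I, hI⟩ := M.exists_isBasis' S
  exact hI.rk_eq_ncard ▸ hI.indep.ncard_le_rank

theorem rk_eq_zero_of_subset_loops (hS : S ⊆ M.loops) : rk M S = 0 := by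
  obtain ⟨I, hI⟩ := M.exists_isBasis' S
  rw [hI.rk_eq_ncard, ncard_eq_zero]
  exact disjoint_self.1 (hI.indep.disjoint_loops.mono_right (hI.subset.trans hS))

theorem one_le_rk_of_not_subset_loops (hS : S ⊆ M.E) (h : ¬ S ⊆ M.loops) : 1 ≤ rk M S := by
  obtain ⟨x, hxS, hx⟩ := not_subset.1 h
  have hx : M.Indep {x} := indep_singleton.2 (isNonloop_iff_mem_compl_loops.2 ⟨hS hxS, hx⟩)
  simpa using hx.ncard_le_rk (singleton_subset_iff.2 hxS)

theorem rank_contract_add_rk (M : Matroid α) (S : Set α) :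
    rank (M ⧸ S) + rk M S = rank M := by
  obtain ⟨I, hI⟩ := M.exists_isBasis' S
  obtain ⟨B, hB, hIB⟩ := hI.indep.exists_isBase_superset
  have hBS : B ∩ S = I := hI.inter_eq_of_subset_indep hIB hB.indep
  have hcontr : ∀ {J}, (M ⧸ S).Indep J ↔ M.Indep (J ∪ I) ∧ Disjoint S J :=
    hI.contract_indep_iff
  obtain ⟨J, hJ⟩ := (M ⧸ S).exists_isBase
  obtain ⟨hJI, hSJ⟩ := hcontr.1 hJ.indep
  have hle : J.ncard + I.ncard ≤ rank M := by
    rw [← ncard_union_eq (hSJ.symm.mono_right hI.subset)]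
    exact hJI.ncard_le_rank
  have hge : (B \ S).ncard ≤ rank (M ⧸ S) := by
    refine (hcontr.2 ⟨?_, disjoint_sdiff_right⟩).ncard_le_rank
    rw [← hBS, sdiff_union_inter]
    exact hB.indep
  have hBsplit : (B \ S).ncard + I.ncard = rank M := by
    rw [← hBS, add_comm, ncard_inter_add_ncard_sdiff_eq_ncard, hB.ncard_eq_rank]
  have hJrank := hJ.ncard_eq_rank
  rw [hI.rk_eq_ncard]
  omega

end Matroid

namespace KLPaper

variable {α : Type} {M Mt : Matroid α} {H S I : Set α}

theorem contract_eq (M : Matroid α) (S : Set α) : contract M S = M ／ S := rfl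

theorem isCircuit_iff : IsCircuit M S ↔ M.IsCircuit S := by
  rw [Matroid.isCircuit_iff_forall_ssubset]
  rfl

theorem contract_ground_eq_empty_iff (hSE : S ⊆ M.E) : (M ⧸ S).E = ∅ ↔ S = M.E := by
  rw [contract_eq, contract_ground, sdiff_eq_empty]
  exact ⟨hSE.antisymm, fun h => h.superset⟩

theorem IsHyperplane.exists_mem_notMem (hH : IsHyperplane M H) : ∃ x ∈ M.E, x ∉ H :=
  exists_of_ssubset (ssubset_of_subset_of_ne hH.1.subset_ground hH.2.1)

theorem IsHyperplane.rk_lt_rank [Finite α] (hH : IsHyperplane M H) : rk M H < rank M := by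
  obtain ⟨I, hI⟩ := M.exists_isBasis' H
  rw [hI.rk_eq_ncard]
  by_contra! h
  refine hH.2.1 (hH.1.subset_ground.antisymm ?_)
  rw [← (hI.indep.isBase_of_rank_le_ncard h).closure_eq]
  exact hH.1.closure_subset_of_subset hI.subset

theorem IsHyperplane.contract (hH : IsHyperplane M H) (hSH : S ⊆ H) :
    IsHyperplane (contract M S) (H \ S) := by
  obtain ⟨hflat, hne, hmax⟩ := hH
  have hSE : S ⊆ M.E := hSH.trans hflat.subset_ground
  rw [contract_eq]
  refine ⟨?_, ?_, fun F hF hHF => ?_⟩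
  · rw [isFlat_iff_closure_eq, contract_closure_eq, sdiff_union_of_subset hSH, hflat.closure]
  · rw [contract_ground]
    exact fun h => hne (by rw [← sdiff_union_of_subset hSH, h, sdiff_union_of_subset hSE])
  have hFS : Disjoint F S := disjoint_of_subset_left hF.subset_ground disjoint_sdiff_left
  have hFS_flat : M.IsFlat (F ∪ S) := by
    have hcl := hF.closure
    rw [contract_closure_eq] at hcl
    refine isFlat_iff_closure_eq.2 (subset_antisymm (fun x hx => ?_)
      (M.subset_closure _ (union_subset (hF.subset_ground.trans sdiff_subset) hSE)))
    by_cases hxS : x ∈ S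
    exacts [Or.inr hxS, Or.inl (hcl ▸ ⟨hx, hxS⟩)]
  have hHFS : H ⊂ F ∪ S := by
    obtain ⟨y, hyF, hyHS⟩ := exists_of_ssubset hHF
    refine (ssubset_iff_of_subset ?_).2
      ⟨y, Or.inl hyF, fun hyH => hyHS ⟨hyH, hFS.notMem_of_mem_left hyF⟩⟩
    rw [← sdiff_union_of_subset hSH]
    exact union_subset_union_left S hHF.subset
  rw [contract_ground, ← hmax _ hFS_flat hHFS, union_sdiff_right, hFS.sdiff_eq_left]

theorem Stressed.indep_of_ncard_lt (hSt : Stressed M H) (hkh : rank M ≤ H.ncard) (hIH : I ⊆ H)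
    (hI : I.ncard < rank M) : M.Indep I := by
  obtain ⟨C, hIC, hCH, hC⟩ := exists_subsuperset_card_eq hIH hI.le hkh
  exact (hSt.2 C hCH hC).2 I (hIC.ssubset_of_ne (by rintro rfl; omega))

theorem Stressed.rk_add_one_eq_rank [Finite α] (hSt : Stressed M H) (hkh : rank M ≤ H.ncard)
    (hSH : S ⊆ H) (hS : rank M ≤ S.ncard) : rk M S + 1 = rank M := by
  have hlt := (M.rk_mono hSH).trans_lt hSt.1.rk_lt_rank
  obtain ⟨D, hDS, hD⟩ := exists_subset_card_eq (show rank M - 1 ≤ S.ncard by omega)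
  have := (hSt.indep_of_ncard_lt hkh (hDS.trans hSH) (by omega)).ncard_le_rk hDS
  omega

theorem Stressed.closure_eq [Finite α] (hSt : Stressed M H) (hkh : rank M ≤ H.ncard)
    (hSH : S ⊆ H) (hS : rank M ≤ S.ncard) : M.closure S = H := by
  refine subset_antisymm (hSt.1.1.closure_subset_of_subset hSH) fun x hxH => by_contra fun hx => ?_
  obtain ⟨I, hI⟩ := M.exists_isBasis' S
  rw [← hI.closure_eq_closure] at hx
  have hxI : x ∉ I := fun h => hx (M.subset_closure I hI.indep.subset_ground h)
  have hins : M.Indep (insert x I) :=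
    (hI.indep.insert_indep_iff_of_notMem hxI).2 ⟨hSt.1.1.subset_ground hxH, hx⟩
  have hle := hins.ncard_le_rk (insert_subset hxH (hI.subset.trans hSH))
  rw [ncard_insert_of_notMem hxI, ← hI.rk_eq_ncard] at hle
  have := hSt.1.rk_lt_rank
  have := hSt.rk_add_one_eq_rank hkh hSH hS
  omega

theorem Stressed.contract [Finite α] (hSt : Stressed M H) (hkh : rank M ≤ H.ncard)
    (hSH : S ⊆ H) (hS : S.ncard < rank M) : Stressed (contract M S) (H \ S) := by
  have hrank : rank (M ⧸ S) + S.ncard = rank M :=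
    (hSt.indep_of_ncard_lt hkh hSH hS).rk_eq_ncard ▸ M.rank_contract_add_rk S
  refine ⟨hSt.1.contract hSH, fun C hCHS hC => ?_⟩
  have hCS : Disjoint C S := disjoint_of_subset_left hCHS disjoint_sdiff_left
  have hCS_circuit : M.IsCircuit (C ∪ S) := isCircuit_iff.1 <|
    hSt.2 _ (union_subset (hCHS.trans sdiff_subset) hSH) (by rw [ncard_union_eq hCS]; omega)
  have hSC : S ⊂ C ∪ S := (ssubset_iff_of_subset subset_union_right).2
    ((nonempty_of_ncard_ne_zero (by omega)).imp fun x hx =>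
      ⟨Or.inl hx, hCS.notMem_of_mem_left hx⟩)
  rw [isCircuit_iff, contract_eq]
  simpa [union_sdiff_right, hCS.sdiff_eq_left] using hCS_circuit.contract_isCircuit hSC

theorem IsRelaxation.indep_of_indep (hR : IsRelaxation M Mt H) (hI : M.Indep I) : Mt.Indep I := by
  obtain ⟨B, hB, hIB⟩ := hI.exists_isBase_superset
  exact ((hR.2 B).2 (Or.inl hB)).indep.subset hIB

theorem IsRelaxation.indep_iff_of_not_subset (hR : IsRelaxation M Mt H) (hIH : ¬ I ⊆ H) :
    Mt.Indep I ↔ M.Indep I := by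
  refine ⟨fun hI => ?_, hR.indep_of_indep⟩
  obtain ⟨B, hB, hIB⟩ := hI.exists_isBase_superset
  obtain hB | hBH := (hR.2 B).1 hB
  exacts [hB.indep.subset hIB, absurd (hIB.trans hBH.1) hIH]

theorem IsRelaxation.isBasis_of_not_subset (hR : IsRelaxation M Mt H) (hH : M.IsFlat H)
    (hI : M.IsBasis I S) (hSH : ¬ S ⊆ H) : Mt.IsBasis I S := by
  have hiff : ∀ J, I ⊆ J → (Mt.Indep J ↔ M.Indep J) := fun J hIJ =>
    hR.indep_iff_of_not_subset fun hJH =>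
      hSH (hI.subset_closure.trans (hH.closure_subset_of_subset (hIJ.trans hJH)))
  exact ⟨⟨⟨(hiff I le_rfl).2 hI.indep, hI.subset⟩,
    fun J hJ hIJ => hI.1.2 ⟨(hiff J hIJ).1 hJ.1, hJ.2⟩ hIJ⟩, hR.1 ▸ hI.subset_ground⟩

theorem IsRelaxation.contract_eq_of_not_subset (hR : IsRelaxation M Mt H) (hH : M.IsFlat H)
    (hS : S ⊆ M.E) (hSH : ¬ S ⊆ H) : contract Mt S = contract M S := by
  obtain ⟨I, hI⟩ := M.exists_isBasis S
  refine ext_indep (by simp [contract_eq, hR.1]) fun J _ => ?_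
  rw [contract_eq, contract_eq, (hR.isBasis_of_not_subset hH hI hSH).contract_indep_iff,
    hI.contract_indep_iff, hR.indep_iff_of_not_subset]
  exact fun hJIH => hSH (hI.subset_closure.trans
    (hH.closure_subset_of_subset (subset_union_right.trans hJIH)))

theorem IsRelaxation.rk_eq_of_not_subset [Finite α] (hR : IsRelaxation M Mt H) (hH : M.IsFlat H)
    (hS : S ⊆ M.E) (hSH : ¬ S ⊆ H) : rk Mt S = rk M S := by
  obtain ⟨I, hI⟩ := M.exists_isBasis S
  rw [hI.isBasis'.rk_eq_ncard, (hR.isBasis_of_not_subset hH hI hSH).isBasis'.rk_eq_ncard]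

theorem IsRelaxation.rank_eq [Finite α] (hR : IsRelaxation M Mt H) : rank Mt = rank M := by
  obtain ⟨B, hB⟩ := Mt.exists_isBase
  rw [← hB.ncard_eq_rank]
  obtain hB' | ⟨-, hBk⟩ := (hR.2 B).1 hB
  exacts [hB'.ncard_eq_rank, hBk]

theorem IsRelaxation.rk_eq_rank [Finite α] (hR : IsRelaxation M Mt H) (hSH : S ⊆ H)
    (hS : rank M ≤ S.ncard) : rk Mt S = rank M := by
  obtain ⟨T, hTS, hT⟩ := exists_subset_card_eq hS
  have hT_base : Mt.IsBase T := (hR.2 T).2 (Or.inr ⟨hTS.trans hSH, hT⟩)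
  have := hT_base.indep.ncard_le_rk hTS
  have := hR.rank_eq ▸ Mt.rk_le_rank S
  omega

theorem IsRelaxation.contract [Finite α] (hR : IsRelaxation M Mt H) (hSi : M.Indep S)
    (hSH : S ⊆ H) : IsRelaxation (contract M S) (contract Mt S) (H \ S) := by
  have hrank : rank (M ／ S) + S.ncard = rank M := by
    rw [← hSi.rk_eq_ncard]
    exact M.rank_contract_add_rk S
  refine ⟨by simp [contract_eq, hR.1], fun B => ?_⟩
  rw [contract_eq, contract_eq, (hR.indep_of_indep hSi).contract_isBase_iff,
    hSi.contract_isBase_iff, hR.2]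
  constructor
  · rintro ⟨hB | ⟨hBSH, hBS⟩, hdisj⟩
    · exact Or.inl ⟨hB, hdisj⟩
    · refine Or.inr ⟨subset_sdiff.2 ⟨subset_union_left.trans hBSH, hdisj⟩, ?_⟩
      rw [ncard_union_eq hdisj] at hBS
      omega
  · rintro (⟨hB, hdisj⟩ | ⟨hBHS, hB⟩)
    · exact ⟨Or.inl hB, hdisj⟩
    · have hdisj := (subset_sdiff.1 hBHS).2
      refine ⟨Or.inr ⟨union_subset (hBHS.trans sdiff_subset) hSH, ?_⟩, hdisj⟩
      rw [ncard_union_eq hdisj]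
      omega

/-- By the palindromicity of `Z_M`, `klExtract (rk M)` recovers `P_M` from `Z_M - P_M`. -/
noncomputable def klExtract (k : ℕ) (q : ℤ[X]) : ℤ[X] :=
  ∑ i ∈ Finset.range ((k + 1) / 2), monomial i (q.coeff (k - i) - q.coeff i)

theorem coeff_klExtract (k : ℕ) (q : ℤ[X]) (i : ℕ) :
    (klExtract k q).coeff i = if 2 * i < k then q.coeff (k - i) - q.coeff i else 0 := by
  simp only [klExtract, finsetSum_coeff, coeff_monomial, Finset.sum_ite_eq', Finset.mem_range]
  exact if_congr (by omega) rfl rfl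

theorem klExtract_add (k : ℕ) (q r : ℤ[X]) :
    klExtract k (q + r) = klExtract k q + klExtract k r := by
  ext i
  simp only [coeff_klExtract, coeff_add]
  split_ifs <;> ring

theorem klExtract_one (q : ℤ[X]) : klExtract 1 q = C (q.coeff 1 - q.coeff 0) := by
  ext (_ | i) <;> rw [coeff_klExtract, coeff_C] <;> simp

section PZaxioms

open scoped Classical

theorem mem_powerset_erase_empty_iff {T : Set α} (hT : T.Finite) {S : Finset α} :
    S ∈ hT.toFinset.powerset.erase ∅ ↔ (S : Set α).Nonempty ∧ (S : Set α) ⊆ T := by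
  rw [Finset.mem_erase, Finset.mem_powerset, Set.Finite.subset_toFinset, Finset.coe_nonempty,
    Finset.nonempty_iff_ne_empty]

theorem coe_eq_iff_eq_toFinset {T : Set α} (hT : T.Finite) {S : Finset α} :
    (S : Set α) = T ↔ S = hT.toFinset := by
  rw [← Finset.coe_inj, Set.Finite.coe_toFinset]

variable [Fintype α] {P Z : Matroid α → ℤ[X]}

/-- `Z_M - P_M`: the part of the sum (iv) over the nonempty `S ⊆ E`. -/
noncomputable def reducedZ (P : Matroid α → ℤ[X]) (M : Matroid α) : ℤ[X] :=
  ∑ S ∈ M.E.toFinite.toFinset.powerset.erase ∅, X ^ rk M S * P (M ⧸ (S : Set α))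

theorem PZaxioms.Z_eq (hPZ : PZaxioms P Z) (M : Matroid α) : Z M = P M + reducedZ P M := by
  rw [hPZ.2.2.2 M, reducedZ, ← Finset.add_sum_erase _ _ (Finset.empty_mem_powerset _),
    Finset.coe_empty, M.empty_indep.rk_eq_ncard, contract_eq, contract_empty]
  simp

theorem PZaxioms.coeff_P_eq_zero (hPZ : PZaxioms P Z) (hE : M.E ≠ ∅) {i : ℕ}
    (hi : rank M ≤ 2 * i) : (P M).coeff i = 0 := by
  obtain h | h := hPZ.2.1 M hE
  · simp [h]
  · exact coeff_eq_zero_of_natDegree_lt (by omega)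

theorem PZaxioms.P_eq_klExtract (hPZ : PZaxioms P Z) (hE : M.E ≠ ∅) :
    P M = klExtract (rank M) (reducedZ P M) := by
  ext i
  rw [coeff_klExtract]
  split_ifs with hi
  · have hpal := (hPZ.2.2.1 M).2 i (by omega)
    rw [hPZ.Z_eq, coeff_add, coeff_add, hPZ.coeff_P_eq_zero hE (i := rank M - i) (by omega)] at hpal
    linarith
  · exact hPZ.coeff_P_eq_zero hE (by omega)

theorem PZaxioms.P_of_rank_eq_zero (hPZ : PZaxioms P Z) (h : rank M = 0) :
    P M = if M.E = ∅ then 1 else 0 := by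
  split_ifs with hE
  exacts [(hPZ.1 M hE).1, (hPZ.2.1 M hE).resolve_right (by omega)]

theorem PZaxioms.P_of_rank_eq_one (hPZ : PZaxioms P Z) (hE : M.E ≠ ∅) (h1 : rank M = 1) :
    P M = if M.loops = ∅ then 1 else 0 := by
  induction hn : M.E.ncard using Nat.strong_induction_on generalizing M with | _ n ih =>
  have hterm : ∀ S : Set α, S.Nonempty → S ⊆ M.E →
      X ^ rk M S * P (M ⧸ S) = (if S = M.E then X else 0) + (if S = M.loops then 1 else 0) := by
    intro S hS hSE
    have hrank := M.rank_contract_add_rk S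
    by_cases hSL : S ⊆ M.loops
    · have hrk := rk_eq_zero_of_subset_loops hSL
      have hSE' : S ≠ M.E := fun h => by
        have := rk_eq_zero_of_subset_loops (h ▸ hSL)
        exact absurd h1 (by rw [rank]; omega)
      have hlt : (M ⧸ S).E.ncard < n :=
        hn ▸ ncard_lt_ncard (LE.le.sdiff_ssubset_of_nonempty hSE hS)
      rw [ih _ hlt (M := M ⧸ S) (by rwa [Ne, contract_ground_eq_empty_iff hSE]) (by omega) rfl,
        contract_eq, contract_loops_eq, closure_eq_loops_of_subset hSL, if_neg hSE', hrk,
        pow_zero, one_mul, zero_add]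
      simp only [sdiff_eq_empty]
      exact if_congr ⟨hSL.antisymm, fun h => h.symm.subset⟩ rfl rfl
    · have hrk : rk M S = 1 :=
        le_antisymm (h1 ▸ M.rk_le_rank S) (one_le_rk_of_not_subset_loops hSE hSL)
      rw [hrk, pow_one, hPZ.P_of_rank_eq_zero (M := M ⧸ S) (by omega)]
      simp only [contract_ground_eq_empty_iff hSE, if_neg fun h : S = M.loops => hSL h.subset,
        add_zero]
      split_ifs <;> simp
  have hsum : reducedZ P M = X + if M.loops = ∅ then 0 else 1 := by
    rw [reducedZ, Finset.sum_congr rfl fun (S : Finset α) hS =>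
      hterm S ((mem_powerset_erase_empty_iff M.E.toFinite).1 hS).1
        ((mem_powerset_erase_empty_iff M.E.toFinite).1 hS).2]
    simp only [coe_eq_iff_eq_toFinset M.E.toFinite, coe_eq_iff_eq_toFinset M.loops.toFinite,
      Finset.sum_add_distrib, Finset.sum_ite_eq', mem_powerset_erase_empty_iff,
      Set.Finite.coe_toFinset, nonempty_iff_ne_empty, loops_subset_ground, and_true]
    simp [hE]
  rw [hPZ.P_eq_klExtract hE, h1, klExtract_one, hsum]
  split_ifs <;> simp [coeff_one]

theorem PZaxioms.P_contract_of_stressed (hPZ : PZaxioms P Z) (hSt : Stressed M H)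
    (hkh : rank M ≤ H.ncard) (hSH : S ⊆ H) (hS : rank M ≤ S.ncard) :
    P (M ⧸ S) = if S.ncard = H.ncard then 1 else 0 := by
  obtain ⟨x, hxE, hxH⟩ := hSt.1.exists_mem_notMem
  have hME : (M ⧸ S).E ≠ ∅ := nonempty_iff_ne_empty.1 ⟨x, hxE, fun hxS => hxH (hSH hxS)⟩
  have hrank := M.rank_contract_add_rk S
  have hrk := hSt.rk_add_one_eq_rank hkh hSH hS
  rw [hPZ.P_of_rank_eq_one hME (by omega), contract_eq, contract_loops_eq,
    hSt.closure_eq hkh hSH hS]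
  simp only [sdiff_eq_empty]
  exact if_congr ⟨fun h => congrArg ncard (hSH.antisymm h),
    fun h => (eq_of_subset_of_ncard_le hSH h.ge).superset⟩ rfl rfl

theorem PZaxioms.P_contract_of_relaxation (hPZ : PZaxioms P Z) (hSt : Stressed M H)
    (hR : IsRelaxation M Mt H) (hSH : S ⊆ H) (hS : rank M ≤ S.ncard) : P (Mt ⧸ S) = 0 := by
  obtain ⟨x, hxE, hxH⟩ := hSt.1.exists_mem_notMem
  have hrank := Mt.rank_contract_add_rk S
  rw [hR.rank_eq, hR.rk_eq_rank hSH hS] at hrank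
  rw [hPZ.P_of_rank_eq_zero (by omega), if_neg]
  exact nonempty_iff_ne_empty.1 ⟨x, hR.1 ▸ hxE, fun hxS => hxH (hSH hxS)⟩

end PZaxioms

/-- The polynomial `p_{k,h}`, by the recursion which the formula (iv) forces on it. -/
noncomputable def relaxPoly (k h : ℕ) : ℤ[X] :=
  klExtract k (∑ m ∈ (Finset.Ioo 0 k).attach,
    h.choose m • (X ^ (m : ℕ) * relaxPoly (k - m) (h - m)) - X ^ (k - 1))
termination_by k
decreasing_by have := Finset.mem_Ioo.1 m.2; omega

theorem relaxPoly_eq (k h : ℕ) :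
    relaxPoly k h = klExtract k (∑ m ∈ Finset.Ioo 0 k,
      h.choose m • (X ^ m * relaxPoly (k - m) (h - m)) - X ^ (k - 1)) := by
  rw [relaxPoly, Finset.sum_attach (Finset.Ioo 0 k)
    fun m => h.choose m • (X ^ m * relaxPoly (k - m) (h - m))]

/-- The contribution of a nonempty `m`-subset `S ⊆ H` to `(Z_{M̃} - P_{M̃}) - (Z_M - P_M)`. -/
noncomputable def relaxSummand (k h m : ℕ) : ℤ[X] :=
  (if 0 < m ∧ m < k then X ^ m * relaxPoly (k - m) (h - m) else 0) -
    if m = h then X ^ (k - 1) else 0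

open scoped Classical in
theorem sum_relaxSummand {β : Type} (T : Finset β) {k : ℕ} (hk : 1 ≤ k) (hkT : k ≤ T.card) :
    ∑ S ∈ T.powerset.erase ∅, relaxSummand k T.card S.card =
      ∑ m ∈ Finset.Ioo 0 k, T.card.choose m • (X ^ m * relaxPoly (k - m) (T.card - m)) -
        X ^ (k - 1) := by
  have hfilter :
      (Finset.range (T.card + 1)).filter (fun m => 0 < m ∧ m < k) = Finset.Ioo 0 k := by
    ext m
    simp only [Finset.mem_filter, Finset.mem_range, Finset.mem_Ioo]
    omega
  rw [Finset.sum_erase _ (by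
      rw [relaxSummand, Finset.card_empty, if_neg (by omega), if_neg (by omega), sub_zero]),
    Finset.sum_powerset_apply_card]
  simp only [relaxSummand, smul_sub, Finset.sum_sub_distrib, smul_ite, smul_zero,
    Finset.sum_ite_eq', Finset.mem_range, lt_add_one, if_true, Nat.choose_self, one_smul,
    ← Finset.sum_filter, hfilter]

section Relaxation

open scoped Classical

variable [Fintype α] {P Z : Matroid α → ℤ[X]}

def RelaxationFormula (P : Matroid α → ℤ[X]) (k : ℕ) : Prop :=
  ∀ ⦃M Mt : Matroid α⦄ ⦃H : Set α⦄, rank M = k → k ≤ H.ncard → Stressed M H →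
    IsRelaxation M Mt H → P Mt = P M + relaxPoly k H.ncard

theorem RelaxationFormula.contract (hP : RelaxationFormula P (rank M - S.ncard))
    (hSt : Stressed M H) (hR : IsRelaxation M Mt H) (hkh : rank M ≤ H.ncard) (hSH : S ⊆ H)
    (hS : S.ncard < rank M) :
    P (Mt ⧸ S) = P (M ⧸ S) + relaxPoly (rank M - S.ncard) (H.ncard - S.ncard) := by
  have hSi := hSt.indep_of_ncard_lt hkh hSH hS
  have hrank := M.rank_contract_add_rk S
  rw [hSi.rk_eq_ncard] at hrank
  rw [← ncard_sdiff hSH]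
  exact hP (by omega) (by rw [ncard_sdiff hSH]; omega) (hSt.contract hkh hSH hS)
    (hR.contract hSi hSH)

theorem PZaxioms.relaxation_term_sub (hPZ : PZaxioms P Z) (hSt : Stressed M H)
    (hR : IsRelaxation M Mt H) (hkh : rank M ≤ H.ncard)
    (ih : ∀ m < rank M, RelaxationFormula P m) (hS : S.Nonempty) (hSE : S ⊆ M.E) :
    X ^ rk Mt S * P (Mt ⧸ S) - X ^ rk M S * P (M ⧸ S) =
      if S ⊆ H then relaxSummand (rank M) H.ncard S.ncard else 0 := by
  by_cases hSH : S ⊆ H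
  swap
  · rw [hR.rk_eq_of_not_subset hSt.1.1 hSE hSH, hR.contract_eq_of_not_subset hSt.1.1 hSE hSH,
      sub_self, if_neg hSH]
  have hS0 : 0 < S.ncard := (ncard_pos S.toFinite).2 hS
  rw [if_pos hSH, relaxSummand]
  by_cases hsmall : S.ncard < rank M
  · have hSi := hSt.indep_of_ncard_lt hkh hSH hsmall
    rw [(hR.indep_of_indep hSi).rk_eq_ncard, hSi.rk_eq_ncard,
      (ih _ (by omega)).contract hSt hR hkh hSH hsmall, if_pos ⟨hS0, hsmall⟩, if_neg (by omega)]
    ring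
  · have hrk := hSt.rk_add_one_eq_rank hkh hSH (by omega)
    rw [hR.rk_eq_rank hSH (by omega), hPZ.P_contract_of_relaxation hSt hR hSH (by omega),
      hPZ.P_contract_of_stressed hSt hkh hSH (by omega), show rk M S = rank M - 1 by omega,
      if_neg (show ¬(0 < S.ncard ∧ S.ncard < rank M) by omega)]
    split_ifs <;> simp

theorem PZaxioms.reducedZ_relaxation_sub (hPZ : PZaxioms P Z) (hSt : Stressed M H)
    (hR : IsRelaxation M Mt H) (hkh : rank M ≤ H.ncard)
    (ih : ∀ m < rank M, RelaxationFormula P m) :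
    reducedZ P Mt - reducedZ P M = ∑ m ∈ Finset.Ioo 0 (rank M),
      H.ncard.choose m • (X ^ m * relaxPoly (rank M - m) (H.ncard - m)) - X ^ (rank M - 1) := by
  have hEf : Mt.E.toFinite.toFinset = M.E.toFinite.toFinset := by simp [hR.1]
  have hfilter : (M.E.toFinite.toFinset.powerset.erase ∅).filter (fun S => ↑S ⊆ H) =
      H.toFinite.toFinset.powerset.erase ∅ := by
    ext S
    simp only [Finset.mem_filter, mem_powerset_erase_empty_iff]
    exact ⟨fun h => ⟨h.1.1, h.2⟩,
      fun h => ⟨⟨h.1, h.2.trans hSt.1.1.subset_ground⟩, h.2⟩⟩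
  rw [reducedZ, reducedZ, hEf, ← Finset.sum_sub_distrib]
  rw [Finset.sum_congr rfl fun (S : Finset α) hS =>
      hPZ.relaxation_term_sub hSt hR hkh ih ((mem_powerset_erase_empty_iff _).1 hS).1
        ((mem_powerset_erase_empty_iff _).1 hS).2, ← Finset.sum_filter, hfilter,
    ncard_eq_toFinset_card H]
  simp only [ncard_coe_finset]
  exact sum_relaxSummand _ (by have := hSt.1.rk_lt_rank; omega) (ncard_eq_toFinset_card H ▸ hkh)

theorem PZaxioms.relaxationFormula (hPZ : PZaxioms P Z) (k : ℕ) : RelaxationFormula P k := by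
  induction k using Nat.strong_induction_on with | _ k ih =>
  intro M Mt H hk hkh hSt hR
  subst hk
  obtain ⟨x, hx, -⟩ := hSt.1.exists_mem_notMem
  have hE : M.E ≠ ∅ := nonempty_iff_ne_empty.1 ⟨x, hx⟩
  rw [hPZ.P_eq_klExtract (hR.1 ▸ hE), hR.rank_eq,
    ← sub_add_cancel (reducedZ P Mt) (reducedZ P M), klExtract_add,
    hPZ.reducedZ_relaxation_sub hSt hR hkh ih, ← relaxPoly_eq, ← hPZ.P_eq_klExtract hE,
    add_comm]

end Relaxation

theorem relaxation_KL_polynomial_general (k h : ℕ) (hkh : k ≤ h) :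
    ∃ p : Polynomial ℤ,
      ∀ (β : Type) [Fintype β],
        ∀ (P Z : Matroid β → Polynomial ℤ), PZaxioms P Z →
          ∀ (M Mt : Matroid β) (H : Set β),
            rank M = k → Stressed M H → H.ncard = h → IsRelaxation M Mt H →
            P Mt = P M + p :=
  ⟨relaxPoly k h, fun _ _ _ _ hPZ _ _ _ hk hSt hH hR =>
    hH ▸ hPZ.relaxationFormula k hk (hH ▸ hkh) hSt hR⟩

/-- For integers `h ≥ k ≥ 1` there is a polynomial `p_{k,h}(t) ∈ ℤ[t]`,
depending only on `k` and `h`, such that for every matroid `M` of rank `k`, every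
stressed hyperplane `H` of `M` with `|H| = h`, and the relaxation `M̃` of `M` at `H`,
one has `P_{M̃}(t) = P_M(t) + p_{k,h}(t)`. -/
theorem relaxation_KL_polynomial (k h : ℕ) (hk : 1 ≤ k) (hkh : k ≤ h) :
    ∃ p : Polynomial ℤ,
      ∀ (β : Type) [Fintype β],
        ∀ (P Z : Matroid β → Polynomial ℤ), PZaxioms P Z →
          ∀ (M Mt : Matroid β) (H : Set β),
            rank M = k → Stressed M H → H.ncard = h → IsRelaxation M Mt H →
            P Mt = P M + p :=
  relaxation_KL_polynomial_general k h hkh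

end KLPaper
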